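/- arXiv:1905.05473 — 2 statements merged into one kernel-verified Lean document; each statement's English description precedes it below -/
import Mathlib

section
/- Let Ω ⊂ ℝ² be a bounded measurable set and 1 < s ≤ 2. If w₁, w₂ : Ω → ℝ are a.e. positive measurable functions with w₁, w₂ ∈ L^{s/(2-s)}(Ω), then ‖w₁ − w₂‖_{L^s(Ω)} ≤ (‖w₁‖_{L^{s/(2-s)}(Ω)}^{1/2} + ‖w₂‖_{L^{s/(2-s)}(Ω)}^{1/2}) · ‖√w₁ − √w₂‖_{L²(Ω)}. -/
open MeasureTheory
open scoped ENNReal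

section

variable {α : Type*} [MeasurableSpace α] {μ : Measure α}

theorem eLpNorm_sqrt {w : α → ℝ} (hw : ∀ᵐ x ∂μ, 0 ≤ w x) (p : ℝ≥0∞) :
    eLpNorm (fun x => √(w x)) (2 * p) μ = eLpNorm w p μ ^ (1 / 2 : ℝ) := by
  have hsqrt : eLpNorm (fun x => √(w x)) (2 * p) μ =
      eLpNorm (fun x => ‖w x‖ ^ (1 / 2 : ℝ)) (2 * p) μ := by
    refine eLpNorm_congr_ae ?_
    filter_upwards [hw] with x hx
    rw [Real.norm_eq_abs, abs_of_nonneg hx, Real.sqrt_eq_rpow]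
  rw [hsqrt, eLpNorm_norm_rpow w (by norm_num), ENNReal.ofReal_div_of_pos two_pos,
    ENNReal.ofReal_one, ENNReal.ofReal_ofNat, mul_comm, ← mul_assoc,
    ENNReal.div_mul_cancel two_ne_zero ENNReal.ofNat_ne_top, one_mul]

/-- Writing `w₁ - w₂ = (√w₁ + √w₂)(√w₁ - √w₂)`, this is Hölder followed by Minkowski for the
first factor. -/
theorem eLpNorm_sub_le_mul_eLpNorm_sqrt_sub {w₁ w₂ : α → ℝ}
    (hw₁m : AEMeasurable w₁ μ) (hw₂m : AEMeasurable w₂ μ)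
    (hw₁ : ∀ᵐ x ∂μ, 0 ≤ w₁ x) (hw₂ : ∀ᵐ x ∂μ, 0 ≤ w₂ x)
    {p q : ℝ≥0∞} (hp : 1 ≤ 2 * p) [ENNReal.HolderTriple (2 * p) 2 q] :
    eLpNorm (fun x => w₁ x - w₂ x) q μ ≤
      (eLpNorm w₁ p μ ^ (1 / 2 : ℝ) + eLpNorm w₂ p μ ^ (1 / 2 : ℝ)) *
        eLpNorm (fun x => √(w₁ x) - √(w₂ x)) 2 μ := by
  have h₁ : AEStronglyMeasurable (fun x => √(w₁ x)) μ := hw₁m.sqrt.aestronglyMeasurable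
  have h₂ : AEStronglyMeasurable (fun x => √(w₂ x)) μ := hw₂m.sqrt.aestronglyMeasurable
  have hfactor : eLpNorm (fun x => w₁ x - w₂ x) q μ =
      eLpNorm ((fun x => √(w₁ x) + √(w₂ x)) • fun x => √(w₁ x) - √(w₂ x)) q μ := by
    refine eLpNorm_congr_ae ?_
    filter_upwards [hw₁, hw₂] with x hx₁ hx₂
    rw [Pi.smul_apply', smul_eq_mul, ← sq_sub_sq, Real.sq_sqrt hx₁, Real.sq_sqrt hx₂]
  calc eLpNorm (fun x => w₁ x - w₂ x) q μ
      ≤ eLpNorm (fun x => √(w₁ x) + √(w₂ x)) (2 * p) μ *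
          eLpNorm (fun x => √(w₁ x) - √(w₂ x)) 2 μ :=
        hfactor ▸ eLpNorm_smul_le_mul_eLpNorm (h₁.sub h₂) (h₁.add h₂)
    _ ≤ (eLpNorm (fun x => √(w₁ x)) (2 * p) μ + eLpNorm (fun x => √(w₂ x)) (2 * p) μ) *
          eLpNorm (fun x => √(w₁ x) - √(w₂ x)) 2 μ :=
        mul_le_mul_left (eLpNorm_add_le h₁ h₂ hp) _
    _ = _ := by rw [eLpNorm_sqrt hw₁, eLpNorm_sqrt hw₂]

end

theorem holderTriple_two_mul_div_two_sub {s : ℝ} (hs1 : 1 < s) (hs2 : s ≤ 2) :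
    ENNReal.HolderTriple (2 * if s = 2 then ∞ else ENNReal.ofReal (s / (2 - s))) 2
      (ENNReal.ofReal s) := by
  rw [ENNReal.holderTriple_iff]
  rcases hs2.eq_or_lt with rfl | hs2
  · simp
  have h2s : 0 < 2 - s := by linarith
  rw [if_neg hs2.ne, ← ENNReal.ofReal_ofNat 2, ← ENNReal.ofReal_mul zero_le_two,
    ← ENNReal.ofReal_inv_of_pos (by positivity), ← ENNReal.ofReal_inv_of_pos two_pos,
    ← ENNReal.ofReal_inv_of_pos (by linarith), ← ENNReal.ofReal_add (by positivity) (by norm_num)]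
  congr 1
  field_simp
  ring

theorem stmt_2_general (Ω : Set (ℝ × ℝ))
    (s : ℝ) (hs1 : 1 < s) (hs2 : s ≤ 2)
    (w₁ w₂ : ℝ × ℝ → ℝ) (hw₁m : Measurable w₁) (hw₂m : Measurable w₂)
    (hw₁ : ∀ᵐ x ∂(volume.restrict Ω), 0 < w₁ x)
    (hw₂ : ∀ᵐ x ∂(volume.restrict Ω), 0 < w₂ x)
    (p : ℝ≥0∞) (hp : p = if s = 2 then ∞ else ENNReal.ofReal (s / (2 - s))) :
    eLpNorm (fun x => w₁ x - w₂ x) (ENNReal.ofReal s) (volume.restrict Ω) ≤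
      ((eLpNorm w₁ p (volume.restrict Ω)) ^ ((1 : ℝ) / 2) +
        (eLpNorm w₂ p (volume.restrict Ω)) ^ ((1 : ℝ) / 2)) *
        eLpNorm (fun x => Real.sqrt (w₁ x) - Real.sqrt (w₂ x)) 2 (volume.restrict Ω) := by
  have hpq : ENNReal.HolderTriple (2 * p) 2 (ENNReal.ofReal s) :=
    hp ▸ holderTriple_two_mul_div_two_sub hs1 hs2
  have hp1 : 1 ≤ 2 * p := by
    rw [← ENNReal.inv_le_one]
    calc (2 * p)⁻¹ ≤ (2 * p)⁻¹ + 2⁻¹ := le_self_add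
      _ = (ENNReal.ofReal s)⁻¹ := hpq.inv_add_inv_eq_inv
      _ ≤ 1 := ENNReal.inv_le_one.mpr (ENNReal.one_le_ofReal.mpr hs1.le)
  exact eLpNorm_sub_le_mul_eLpNorm_sqrt_sub hw₁m.aemeasurable hw₂m.aemeasurable
    (hw₁.mono fun _ h => h.le) (hw₂.mono fun _ h => h.le) hp1

theorem stmt_2 (Ω : Set (ℝ × ℝ)) (hΩm : MeasurableSet Ω) (hΩb : Bornology.IsBounded Ω)
    (s : ℝ) (hs1 : 1 < s) (hs2 : s ≤ 2)
    (w₁ w₂ : ℝ × ℝ → ℝ) (hw₁m : Measurable w₁) (hw₂m : Measurable w₂)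
    (hw₁ : ∀ᵐ x ∂(volume.restrict Ω), 0 < w₁ x)
    (hw₂ : ∀ᵐ x ∂(volume.restrict Ω), 0 < w₂ x)
    (p : ℝ≥0∞) (hp : p = if s = 2 then ∞ else ENNReal.ofReal (s / (2 - s)))
    (hw₁p : MemLp w₁ p (volume.restrict Ω)) (hw₂p : MemLp w₂ p (volume.restrict Ω)) :
    eLpNorm (fun x => w₁ x - w₂ x) (ENNReal.ofReal s) (volume.restrict Ω) ≤
      ((eLpNorm w₁ p (volume.restrict Ω)) ^ ((1 : ℝ) / 2) +
        (eLpNorm w₂ p (volume.restrict Ω)) ^ ((1 : ℝ) / 2)) *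
        eLpNorm (fun x => Real.sqrt (w₁ x) - Real.sqrt (w₂ x)) 2 (volume.restrict Ω) :=
  stmt_2_general Ω s hs1 hs2 w₁ w₂ hw₁m hw₂m hw₁ hw₂ p hp
end

section
/- Let V be a real inner-product-type setting where for weights w₁, w₂ and all f ∈ W₀^{1,2}(Ω): ∬_Ω|w₁−w₂||f|² ≤ B∬_Ω|∇f|², and let λₙ[wᵢ] be defined by the max principle λₙ[wᵢ] = sup over nonzero f in the span Mₙ of the first n eigenfunctions of ∬|∇f|²/∬wᵢ|f|². Then λₙ[w₁] ≥ λₙ[w₂]/(1 + Bλₙ[w₂]). -/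
open MeasureTheory

/-!
For `f ∈ M` write `D = ∬|∇f|²` and `aᵢ = ∬wᵢ|f|²`. The hypothesis gives `a₁ ≤ a₂ + B D`, so
`D ≤ λ₁ a₁ ≤ λ₁ (a₂ + B D) ≤ λ₁ (1 + B λ₂) a₂`. Hence `λ₁ (1 + B λ₂)` bounds every Rayleigh
quotient `D / a₂`, so it bounds their supremum `λ₂`, which rearranges to the claim.
-/

section WeightComparison

variable {α : Type*} [MeasurableSpace α] {μ : Measure α}

theorem integral_le_integral_add_integral_abs_sub {f g : α → ℝ}
    (hf : Integrable f μ) (hg : Integrable g μ) :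
    ∫ x, f x ∂μ ≤ ∫ x, g x ∂μ + ∫ x, |f x - g x| ∂μ := by
  have h := (le_abs_self _).trans (abs_integral_le_integral_abs (f := fun x => f x - g x) (μ := μ))
  rw [integral_sub hf hg] at h
  linarith

theorem integral_mul_sq_le_add_integral_abs_sub_mul_sq {w₁ w₂ f : α → ℝ}
    (h₁ : Integrable (fun x => w₁ x * f x ^ 2) μ) (h₂ : Integrable (fun x => w₂ x * f x ^ 2) μ) :
    ∫ x, w₁ x * f x ^ 2 ∂μ ≤ ∫ x, w₂ x * f x ^ 2 ∂μ + ∫ x, |w₁ x - w₂ x| * f x ^ 2 ∂μ := by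
  simpa only [← sub_mul, abs_mul, abs_sq] using integral_le_integral_add_integral_abs_sub h₁ h₂

end WeightComparison

theorem div_le_mul_one_add_of_le_add {D a₁ a₂ B l₁ l₂ : ℝ} (hD : 0 ≤ D) (ha₁ : 0 < a₁)
    (ha₂ : 0 < a₂) (hB : 0 ≤ B) (hcmp : a₁ ≤ a₂ + B * D) (h₁ : D / a₁ ≤ l₁) (h₂ : D / a₂ ≤ l₂) :
    D / a₂ ≤ l₁ * (1 + B * l₂) := by
  have hl₁ : 0 ≤ l₁ := (div_nonneg hD ha₁.le).trans h₁
  rw [div_le_iff₀ ha₁] at h₁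
  rw [div_le_iff₀ ha₂] at h₂ ⊢
  calc D ≤ l₁ * a₁ := h₁
    _ ≤ l₁ * (a₂ + B * D) := by gcongr
    _ ≤ l₁ * (a₂ + B * (l₂ * a₂)) := by gcongr
    _ = l₁ * (1 + B * l₂) * a₂ := by ring

theorem stmt_19_general (Ω : Set (ℝ × ℝ))
    (w₁ w₂ : ℝ × ℝ → ℝ) (B : ℝ) (hB : 0 < B)
    (M : Submodule ℝ ((ℝ × ℝ) → ℝ))
    (hpos : ∀ f ∈ M, f ≠ 0 →
      (0 < ∫ x in Ω, w₁ x * (f x) ^ 2) ∧ (0 < ∫ x in Ω, w₂ x * (f x) ^ 2))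
    (hbound : ∀ f ∈ M,
      (∫ x in Ω, |w₁ x - w₂ x| * (f x) ^ 2) ≤ B * ∫ x in Ω, ‖fderiv ℝ f x‖ ^ 2)
    (lam₁ lam₂ : ℝ)
    (hlam₁ : IsLUB {t : ℝ | ∃ f ∈ M, f ≠ 0 ∧
      t = (∫ x in Ω, ‖fderiv ℝ f x‖ ^ 2) / ∫ x in Ω, w₁ x * (f x) ^ 2} lam₁)
    (hlam₂ : IsLUB {t : ℝ | ∃ f ∈ M, f ≠ 0 ∧
      t = (∫ x in Ω, ‖fderiv ℝ f x‖ ^ 2) / ∫ x in Ω, w₂ x * (f x) ^ 2} lam₂)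
    (hlam₂0 : 0 ≤ lam₂) :
    lam₁ ≥ lam₂ / (1 + B * lam₂) := by
  have hlam₂_le : lam₂ ≤ lam₁ * (1 + B * lam₂) := hlam₂.2 <| by
    rintro _ ⟨f, hfM, hf0, rfl⟩
    obtain ⟨ha₁, ha₂⟩ := hpos f hfM hf0
    have hcmp := (integral_mul_sq_le_add_integral_abs_sub_mul_sq
      (.of_integral_ne_zero ha₁.ne') (.of_integral_ne_zero ha₂.ne')).trans
      (add_le_add le_rfl (hbound f hfM))
    exact div_le_mul_one_add_of_le_add (integral_nonneg fun _ => by positivity) ha₁ ha₂ hB.le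
      hcmp (hlam₁.1 ⟨f, hfM, hf0, rfl⟩) (hlam₂.1 ⟨f, hfM, hf0, rfl⟩)
  rw [ge_iff_le, div_le_iff₀ (by positivity)]
  exact hlam₂_le

/-- The key one-sided estimate in Lemma 3.1: if the difference of the weights is
controlled by the Dirichlet energy, `∬|w₁−w₂||f|² ≤ B∬|∇f|²`, and `λₙ[wᵢ]` is the
supremum of the Rayleigh quotient `∬|∇f|²/∬wᵢ|f|²` over nonzero `f` in the span `Mₙ`
of the first `n` eigenfunctions, then `λₙ[w₁] ≥ λₙ[w₂]/(1 + Bλₙ[w₂])`. -/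
theorem stmt_19 (Ω : Set (ℝ × ℝ)) (hΩm : MeasurableSet Ω)
    (w₁ w₂ : ℝ × ℝ → ℝ) (B : ℝ) (hB : 0 < B)
    (M : Submodule ℝ ((ℝ × ℝ) → ℝ)) (hMfin : FiniteDimensional ℝ M)
    (hpos : ∀ f ∈ M, f ≠ 0 →
      (0 < ∫ x in Ω, w₁ x * (f x) ^ 2) ∧ (0 < ∫ x in Ω, w₂ x * (f x) ^ 2))
    (hbound : ∀ f ∈ M,
      (∫ x in Ω, |w₁ x - w₂ x| * (f x) ^ 2) ≤ B * ∫ x in Ω, ‖fderiv ℝ f x‖ ^ 2)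
    (lam₁ lam₂ : ℝ)
    (hlam₁ : IsLUB {t : ℝ | ∃ f ∈ M, f ≠ 0 ∧
      t = (∫ x in Ω, ‖fderiv ℝ f x‖ ^ 2) / ∫ x in Ω, w₁ x * (f x) ^ 2} lam₁)
    (hlam₂ : IsLUB {t : ℝ | ∃ f ∈ M, f ≠ 0 ∧
      t = (∫ x in Ω, ‖fderiv ℝ f x‖ ^ 2) / ∫ x in Ω, w₂ x * (f x) ^ 2} lam₂)
    (hlam₂0 : 0 ≤ lam₂) :
    lam₁ ≥ lam₂ / (1 + B * lam₂) :=
  stmt_19_general Ω w₁ w₂ B hB M hpos hbound lam₁ lam₂ hlam₁ hlam₂ hlam₂0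
end
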